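/- arXiv:1307.0239 — 2 statements merged into one kernel-verified Lean document; each statement's English description precedes it below -/
import Mathlib

section
/- (Rank envelope test, rejection case.) There exists r ∈ I with T_1(r) < T_low^(k_α)(r) or T_1(r) > T_upp^(k_α)(r) (i.e., the observed curve exits the global rank envelope strictly) if and only if p_+ ≤ α. -/
/-!
Without ties, `T_i(r)` lies strictly below the `k`-th smallest value at `r` exactly when fewer
than `k` curves are `≤ T_i(r)` there, i.e. when `R_i^↑(r) < k`, and symmetrically above the
`k`-th largest exactly when `R_i^↓(r) < k`. So the observed curve leaves the `k`-envelope
somewhere iff `R_1 < k`. Since `#{i : R_i < k}` is monotone in `k`, `R_1 < k_α` holds iff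
`R_1 + 1` is admissible in the definition of `k_α`, i.e. iff `#{i : R_i ≤ R_1} ≤ α(s+1)`.
-/

open Finset

/-- The upward pointwise rank `R_i^↑(r) = #{j : T_j(r) ≤ T_i(r)}`. -/
noncomputable def upRank {s : ℕ} {ι : Type*} (T : Fin (s + 1) → ι → ℝ) (i : Fin (s + 1)) (r : ι) : ℕ :=
  {j : Fin (s + 1) | T j r ≤ T i r}.ncard

/-- The downward pointwise rank `R_i^↓(r) = #{j : T_j(r) ≥ T_i(r)}`. -/
noncomputable def downRank {s : ℕ} {ι : Type*} (T : Fin (s + 1) → ι → ℝ) (i : Fin (s + 1)) (r : ι) : ℕ :=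
  {j : Fin (s + 1) | T i r ≤ T j r}.ncard

/-- The two-sided pointwise rank `R_i^*(r) = min(R_i^↑(r), R_i^↓(r))`. -/
noncomputable def twoSidedRank {s : ℕ} {ι : Type*} (T : Fin (s + 1) → ι → ℝ) (i : Fin (s + 1)) (r : ι) : ℕ :=
  min (upRank T i r) (downRank T i r)

/-- The extreme rank `R_i = min_{r ∈ I} R_i^*(r)`. -/
noncomputable def extremeRank {s : ℕ} {ι : Type*} [Fintype ι] [Nonempty ι]
    (T : Fin (s + 1) → ι → ℝ) (i : Fin (s + 1)) : ℕ :=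
  univ.inf' univ_nonempty (fun r => twoSidedRank T i r)

/-- The lower bound of the `k`-th envelope: the `k`-th smallest of `T_1(r), …, T_{s+1}(r)`. -/
noncomputable def envLow {s : ℕ} {ι : Type*} (T : Fin (s + 1) → ι → ℝ) (k : ℕ) (r : ι) : ℝ :=
  ((univ.image (fun i => T i r)).sort (· ≤ ·)).getD (k - 1) 0

/-- The upper bound of the `k`-th envelope: the `k`-th largest of `T_1(r), …, T_{s+1}(r)`. -/
noncomputable def envUpp {s : ℕ} {ι : Type*} (T : Fin (s + 1) → ι → ℝ) (k : ℕ) (r : ι) : ℝ :=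
  ((univ.image (fun i => T i r)).sort (· ≤ ·)).getD (s + 1 - k) 0

namespace Finset

variable {α : Type*} [LinearOrder α]

lemma card_filter_le_orderEmbOfFin (A : Finset α) {n : ℕ} (h : #A = n) (j : Fin n) :
    #{a ∈ A | a ≤ A.orderEmbOfFin h j} = j + 1 := by
  have hA := A.map_orderEmbOfFin_univ h
  set g := A.orderEmbOfFin h
  rw [← hA]
  simp only [filter_map, card_map, Function.comp_def, RelEmbedding.coe_toEmbedding,
    OrderEmbedding.le_iff_le, filter_ge_eq_Iic, Fin.card_Iic]

lemma card_filter_orderEmbOfFin_le (A : Finset α) {n : ℕ} (h : #A = n) (j : Fin n) :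
    #{a ∈ A | A.orderEmbOfFin h j ≤ a} = n - j := by
  have hA := A.map_orderEmbOfFin_univ h
  set g := A.orderEmbOfFin h
  rw [← hA]
  simp only [filter_map, card_map, Function.comp_def, RelEmbedding.coe_toEmbedding,
    OrderEmbedding.le_iff_le, filter_le_eq_Ici, Fin.card_Ici]

lemma sort_getD_eq_orderEmbOfFin (A : Finset α) {n : ℕ} (h : #A = n) {j : ℕ} (hj : j < n)
    (d : α) : (A.sort (· ≤ ·)).getD j d = A.orderEmbOfFin h ⟨j, hj⟩ := by
  rw [List.getD_eq_getElem _ _ (by rw [length_sort]; omega), orderEmbOfFin_apply]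
  rfl

variable {A : Finset α} {n : ℕ} {x : α} {k : ℕ}

lemma lt_sort_getD_pred_iff (h : #A = n) (hx : x ∈ A) (hk1 : 1 ≤ k) (hkn : k ≤ n) (d : α) :
    x < (A.sort (· ≤ ·)).getD (k - 1) d ↔ #{a ∈ A | a ≤ x} < k := by
  obtain ⟨i, rfl⟩ : x ∈ Set.range (A.orderEmbOfFin h) := by simpa using hx
  rw [sort_getD_eq_orderEmbOfFin A h (by omega), OrderEmbedding.lt_iff_lt, Fin.lt_def,
    card_filter_le_orderEmbOfFin]
  dsimp only
  omega

lemma sort_getD_sub_lt_iff (h : #A = n) (hx : x ∈ A) (hk1 : 1 ≤ k) (hkn : k ≤ n) (d : α) :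
    (A.sort (· ≤ ·)).getD (n - k) d < x ↔ #{a ∈ A | x ≤ a} < k := by
  obtain ⟨i, rfl⟩ : x ∈ Set.range (A.orderEmbOfFin h) := by simpa using hx
  rw [sort_getD_eq_orderEmbOfFin A h (by omega), OrderEmbedding.lt_iff_lt, Fin.lt_def,
    card_filter_orderEmbOfFin_le]
  dsimp only
  have := i.isLt
  omega

end Finset

section Curves

variable {s : ℕ} {ι : Type*} (T : Fin (s + 1) → ι → ℝ)

lemma upRank_eq_card_filter {r : ι} (hr : Function.Injective (T · r)) (i : Fin (s + 1)) :
    upRank T i r = #{a ∈ univ.image (T · r) | a ≤ T i r} := by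
  rw [filter_image, card_image_of_injective _ hr, upRank, Set.ncard_eq_toFinset_card',
    Set.toFinset_ofPred]

lemma downRank_eq_card_filter {r : ι} (hr : Function.Injective (T · r)) (i : Fin (s + 1)) :
    downRank T i r = #{a ∈ univ.image (T · r) | T i r ≤ a} := by
  rw [filter_image, card_image_of_injective _ hr, downRank, Set.ncard_eq_toFinset_card',
    Set.toFinset_ofPred]

lemma exits_envelope_iff_twoSidedRank_lt {r : ι} (hr : Function.Injective (T · r)) {k : ℕ}
    (hk1 : 1 ≤ k) (hks : k ≤ s + 1) (i : Fin (s + 1)) :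
    T i r < envLow T k r ∨ envUpp T k r < T i r ↔ twoSidedRank T i r < k := by
  have hcard : #(univ.image (T · r)) = s + 1 := by
    rw [card_image_of_injective _ hr, card_univ, Fintype.card_fin]
  have hmem : T i r ∈ univ.image (T · r) := mem_image_of_mem _ (mem_univ i)
  rw [envLow, envUpp, lt_sort_getD_pred_iff hcard hmem hk1 hks,
    sort_getD_sub_lt_iff hcard hmem hk1 hks, twoSidedRank, min_lt_iff,
    upRank_eq_card_filter T hr, downRank_eq_card_filter T hr]

lemma one_le_twoSidedRank (i : Fin (s + 1)) (r : ι) : 1 ≤ twoSidedRank T i r :=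
  le_min ((Set.ncard_pos).2 ⟨i, le_refl (T i r)⟩) ((Set.ncard_pos).2 ⟨i, le_refl (T i r)⟩)

variable [Fintype ι] [Nonempty ι]

lemma one_le_extremeRank (i : Fin (s + 1)) : 1 ≤ extremeRank T i :=
  le_inf' _ _ fun r _ => one_le_twoSidedRank T i r

lemma extremeRank_le (i : Fin (s + 1)) : extremeRank T i ≤ s + 1 := by
  obtain ⟨r⟩ := ‹Nonempty ι›
  calc extremeRank T i ≤ upRank T i r := (inf'_le _ (mem_univ r)).trans (min_le_left _ _)
    _ ≤ Nat.card (Fin (s + 1)) := Set.ncard_le_card _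
    _ = s + 1 := Nat.card_fin _

lemma extremeRank_lt_iff (i : Fin (s + 1)) {k : ℕ} :
    extremeRank T i < k ↔ ∃ r, twoSidedRank T i r < k := by
  simp [extremeRank, inf'_lt_iff]

end Curves

/-- The paper's `k_α`, for `R = extremeRank T` and `m = α(s+1)`. -/
noncomputable def criticalRank {β : Type*} (R : β → ℕ) (m : ℕ) : ℕ :=
  sSup {k : ℕ | 1 ≤ k ∧ {i | R i < k}.ncard ≤ m}

section CriticalRank

variable {β : Type*} [Finite β] (R : β → ℕ) {m : ℕ}

lemma lt_criticalRank_iff (hm : m < Nat.card β) (x : ℕ) :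
    x < criticalRank R m ↔ {i | R i ≤ x}.ncard ≤ m := by
  have hbdd : BddAbove {k : ℕ | 1 ≤ k ∧ {i | R i < k}.ncard ≤ m} := by
    obtain ⟨N, hN⟩ := (Set.finite_range R).bddAbove
    refine ⟨N, fun k ⟨_, hk⟩ => not_lt.1 fun hNk => ?_⟩
    have : {i | R i < k} = Set.univ :=
      Set.eq_univ_of_forall fun i => (hN ⟨i, rfl⟩).trans_lt hNk
    rw [this, Set.ncard_univ] at hk
    omega
  rw [criticalRank, lt_csSup_iff' hbdd]
  constructor
  · rintro ⟨k, ⟨-, hk⟩, hxk⟩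
    exact (Set.ncard_le_ncard fun i (hi : R i ≤ x) => show R i < k by omega).trans hk
  · intro h
    refine ⟨x + 1, ⟨by omega, ?_⟩, by omega⟩
    simpa only [Nat.lt_succ_iff] using h

lemma criticalRank_le {N : ℕ} (hR : ∀ i, R i ≤ N) (hm : m < Nat.card β) :
    criticalRank R m ≤ N := by
  refine not_lt.1 fun h => ?_
  have : {i | R i ≤ N} = Set.univ := Set.eq_univ_of_forall hR
  rw [lt_criticalRank_iff R hm, this, Set.ncard_univ] at h
  omega

lemma one_le_criticalRank (hR : ∀ i, 1 ≤ R i) (hm : m < Nat.card β) : 1 ≤ criticalRank R m := by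
  have : {i | R i ≤ 0} = ∅ := Set.eq_empty_of_forall_notMem fun i (hi : R i ≤ 0) => by
    have := hR i
    omega
  exact (lt_criticalRank_iff R hm 0).2 (by rw [this, Set.ncard_empty]; exact Nat.zero_le m)

end CriticalRank

theorem rank_envelope_rejection_general
    {s : ℕ} {ι : Type*} [Fintype ι] [Nonempty ι]
    (T : Fin (s + 1) → ι → ℝ)
    (hnoties : ∀ r : ι, ∀ i j : Fin (s + 1), i ≠ j → T i r ≠ T j r)
    (α : ℝ) (hα1 : α < 1)
    (m : ℕ) (hm : (m : ℝ) = α * (s + 1))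
    (kα : ℕ)
    (hkα : kα = sSup {k : ℕ | 1 ≤ k ∧ {i : Fin (s + 1) | extremeRank T i < k}.ncard ≤ m}) :
    (∃ r : ι, T 0 r < envLow T kα r ∨ envUpp T kα r < T 0 r) ↔
      ({i : Fin (s + 1) | extremeRank T i ≤ extremeRank T 0}.ncard : ℝ) / (s + 1) ≤ α := by
  have hinj : ∀ r, Function.Injective (T · r) := fun r i j hij =>
    by_contra fun hne => hnoties r i j hne hij
  have hms : m < Nat.card (Fin (s + 1)) := by
    rw [Nat.card_fin]
    exact_mod_cast hm ▸ mul_lt_of_lt_one_left (by positivity) hα1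
  have hk : kα = criticalRank (extremeRank T) m := hkα
  have hk1 : 1 ≤ kα := hk ▸ one_le_criticalRank _ (one_le_extremeRank T) hms
  have hks : kα ≤ s + 1 := hk ▸ criticalRank_le _ (extremeRank_le T) hms
  calc (∃ r, T 0 r < envLow T kα r ∨ envUpp T kα r < T 0 r)
      ↔ ∃ r, twoSidedRank T 0 r < kα :=
        exists_congr fun r => exits_envelope_iff_twoSidedRank_lt T (hinj r) hk1 hks 0
    _ ↔ extremeRank T 0 < kα := (extremeRank_lt_iff T 0).symm
    _ ↔ {i | extremeRank T i ≤ extremeRank T 0}.ncard ≤ m :=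
        hk ▸ lt_criticalRank_iff _ hms _
    _ ↔ _ := by
        rw [div_le_iff₀ (by positivity), ← hm]
        exact_mod_cast Iff.rfl

/-- **Rank envelope test, rejection case.**
There exists `r ∈ I` with `T_1(r) < T_low^(k_α)(r)` or `T_1(r) > T_upp^(k_α)(r)` (the
observed curve exits the global rank envelope strictly) if and only if `p_+ ≤ α`,
where `p_+ = #{i : R_i ≤ R_1}/(s+1)`. -/
theorem rank_envelope_rejection
    {s : ℕ} (hs : 1 ≤ s) {ι : Type*} [Fintype ι] [Nonempty ι]
    (T : Fin (s + 1) → ι → ℝ)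
    (hnoties : ∀ r : ι, ∀ i j : Fin (s + 1), i ≠ j → T i r ≠ T j r)
    (α : ℝ) (hα0 : 0 ≤ α) (hα1 : α < 1)
    (m : ℕ) (hm : (m : ℝ) = α * (s + 1))
    (kα : ℕ)
    (hkα : kα = sSup {k : ℕ | 1 ≤ k ∧ {i : Fin (s + 1) | extremeRank T i < k}.ncard ≤ m}) :
    (∃ r : ι, T 0 r < envLow T kα r ∨ envUpp T kα r < T 0 r) ↔
      ({i : Fin (s + 1) | extremeRank T i ≤ extremeRank T 0}.ncard : ℝ) / (s + 1) ≤ α :=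
  rank_envelope_rejection_general T hnoties α hα1 m hm kα hkα
end

section
/- (Probability that the observed extreme rank equals a symmetric function of the sample.) Let s ≥ 1, let I be a nonempty finite set, and let T_1, …, T_{s+1} be exchangeable random curves with values in ℝ^I (the space of functions I → ℝ with the product σ-algebra) such that almost surely there are no pointwise ties, i.e., for each r ∈ I the values T_1(r), …, T_{s+1}(r) are almost surely pairwise distinct. For each i define the extreme rank R_i = min_{r ∈ I} min(#{j : T_j(r) ≤ T_i(r)}, #{j : T_j(r) ≥ T_i(r)}). Let K : (ℝ^I)^{s+1} → ℕ be a measurable function that is invariant under every permutation of its s+1 arguments. Then P(R_1 = K(T_1, …, T_{s+1})) ≤ 2·|I|/(s+1). In particular, taking K equal to the critical rank k_α of the sample, the expected difference between the rank count test and the conservative rank envelope test is at most 2·|I|/(s+1). -/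
open MeasureTheory
open scoped ENNReal

open Finset

/-! By exchangeability and the symmetry of `K`, the events `R_i = K(T)` all have the same
probability, so `(s + 1) P(R_1 = K(T))` is the expected number of curves whose extreme rank
equals `K(T)`. Without ties this number is at most `2 |I|`: a curve of extreme rank `c` has
upward or downward pointwise rank `c` at some `r ∈ I`, and for each `r` and each direction at
most one curve has pointwise rank `c`, since pointwise ranks of distinct values are distinct. -/

section Ranks

variable {s : ℕ} {ι : Type*}

lemma downRank_eq_upRank_neg (f : Fin (s + 1) → ι → ℝ) (i : Fin (s + 1)) (r : ι) :
    downRank f i r = upRank (-f) i r := by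
  simp [upRank, downRank]

lemma upRank_lt_upRank {f : Fin (s + 1) → ι → ℝ} {r : ι} {i j : Fin (s + 1)}
    (hij : f i r < f j r) : upRank f i r < upRank f j r := by
  refine Set.ncard_lt_ncard ((Set.ssubset_iff_of_subset fun _ hk => ?_).2 ⟨j, le_refl (f j r), ?_⟩)
  · exact le_trans hk hij.le
  · exact not_le.2 hij

lemma upRank_injective {f : Fin (s + 1) → ι → ℝ} {r : ι} (hf : Function.Injective (f · r)) :
    Function.Injective (upRank f · r) := by
  intro i j h
  by_contra hne
  rcases (hf.ne hne).lt_or_gt with hlt | hlt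
  · exact (upRank_lt_upRank hlt).ne h
  · exact (upRank_lt_upRank hlt).ne' h

lemma downRank_injective {f : Fin (s + 1) → ι → ℝ} {r : ι} (hf : Function.Injective (f · r)) :
    Function.Injective (downRank f · r) := by
  simpa only [downRank_eq_upRank_neg] using upRank_injective (f := -f) (neg_injective.comp hf)

lemma upRank_comp_perm (f : Fin (s + 1) → ι → ℝ) (σ : Equiv.Perm (Fin (s + 1)))
    (i : Fin (s + 1)) (r : ι) : upRank (fun j => f (σ j)) i r = upRank f (σ i) r :=
  Set.ncard_preimage_of_injective_subset_range (s := {j | f j r ≤ f (σ i) r}) σ.injective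
    (by simp)

lemma downRank_comp_perm (f : Fin (s + 1) → ι → ℝ) (σ : Equiv.Perm (Fin (s + 1)))
    (i : Fin (s + 1)) (r : ι) : downRank (fun j => f (σ j)) i r = downRank f (σ i) r := by
  simp only [downRank_eq_upRank_neg]
  exact upRank_comp_perm (-f) σ i r

lemma extremeRank_comp_perm [Fintype ι] [Nonempty ι] (f : Fin (s + 1) → ι → ℝ)
    (σ : Equiv.Perm (Fin (s + 1))) (i : Fin (s + 1)) :
    extremeRank (fun j => f (σ j)) i = extremeRank f (σ i) := by
  simp only [extremeRank, twoSidedRank, upRank_comp_perm, downRank_comp_perm]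

lemma exists_extremeRank_eq_twoSidedRank [Fintype ι] [Nonempty ι] (f : Fin (s + 1) → ι → ℝ)
    (i : Fin (s + 1)) : ∃ r, extremeRank f i = twoSidedRank f i r := by
  obtain ⟨r, -, hr⟩ := exists_mem_eq_inf' univ_nonempty (fun r => twoSidedRank f i r)
  exact ⟨r, hr⟩

lemma card_extremeRank_eq_le [Fintype ι] [Nonempty ι] {f : Fin (s + 1) → ι → ℝ}
    (hf : ∀ r, Function.Injective (f · r)) (c : ℕ) :
    {i | extremeRank f i = c}.ncard ≤ 2 * Fintype.card ι := by
  classical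
  rw [Set.ncard_eq_toFinset_card', Set.toFinset_ofPred]
  have card_le_one {g : Fin (s + 1) → ℕ} (hg : Function.Injective g) : #{i | g i = c} ≤ 1 :=
    card_le_one.2 fun i hi j hj => hg ((mem_filter.1 hi).2.trans (mem_filter.1 hj).2.symm)
  have hsub : ({i | extremeRank f i = c} : Finset (Fin (s + 1))) ⊆
      univ.biUnion fun r => {i | upRank f i r = c ∨ downRank f i r = c} := by
    intro i hi
    obtain ⟨r, hr⟩ := exists_extremeRank_eq_twoSidedRank f i
    rw [(mem_filter.1 hi).2] at hr
    simp only [mem_biUnion, mem_filter, mem_univ, true_and]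
    exact ⟨r, (min_choice _ _).imp (·.symm.trans hr.symm) (·.symm.trans hr.symm)⟩
  calc #{i | extremeRank f i = c}
      ≤ ∑ r : ι, #{i | upRank f i r = c ∨ downRank f i r = c} :=
        (card_le_card hsub).trans card_biUnion_le
    _ ≤ ∑ _r : ι, 2 := sum_le_sum fun r _ => by
        rw [filter_or]
        exact (card_union_le _ _).trans (add_le_add (card_le_one (upRank_injective (hf r)))
          (card_le_one (downRank_injective (hf r))))
    _ = 2 * Fintype.card ι := by simp [mul_comm]

end Ranks

section Measurability

lemma measurable_ncard_setOf {α κ : Type*} [MeasurableSpace α] [Finite κ] {p : κ → α → Prop}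
    (hp : ∀ j, MeasurableSet {a | p j a}) : Measurable fun a => {j | p j a}.ncard := by
  classical
  have := Fintype.ofFinite κ
  simp_rw [Set.ncard_eq_toFinset_card', Set.toFinset_ofPred, card_filter]
  exact Finset.measurable_sum _ fun j _ =>
    Measurable.ite (hp j) measurable_const measurable_const

variable {s : ℕ} {ι : Type*}

lemma measurable_upRank (i : Fin (s + 1)) (r : ι) :
    Measurable fun f : Fin (s + 1) → ι → ℝ => upRank f i r :=
  measurable_ncard_setOf fun _ => measurableSet_le (by fun_prop) (by fun_prop)

lemma measurable_downRank (i : Fin (s + 1)) (r : ι) :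
    Measurable fun f : Fin (s + 1) → ι → ℝ => downRank f i r :=
  measurable_ncard_setOf fun _ => measurableSet_le (by fun_prop) (by fun_prop)

lemma measurable_extremeRank [Fintype ι] [Nonempty ι] (i : Fin (s + 1)) :
    Measurable fun f : Fin (s + 1) → ι → ℝ => extremeRank f i := by
  have h : (fun f : Fin (s + 1) → ι → ℝ => extremeRank f i) =
      univ.inf' univ_nonempty fun r f => twoSidedRank f i r := by
    ext f
    simp [extremeRank]
  rw [h]
  exact inf'_induction _ _ (fun _ hg _ hh => hg.min hh)
    fun r _ => (measurable_upRank i r).min (measurable_downRank i r)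

end Measurability

section Exchangeability

variable {Ω : Type*} [MeasurableSpace Ω] {μ : Measure Ω}

lemma sum_measure_le_of_ae_ncard_le {κ : Type*} [Fintype κ] {E : κ → Set Ω}
    (hE : ∀ i, MeasurableSet (E i)) {m : ℕ} (hm : ∀ᵐ ω ∂μ, {i | ω ∈ E i}.ncard ≤ m) :
    ∑ i, μ (E i) ≤ m * μ Set.univ :=
  calc ∑ i, μ (E i) = ∫⁻ ω, ∑ i, (E i).indicator 1 ω ∂μ := by
        rw [lintegral_finsetSum _ fun i _ => measurable_one.indicator (hE i)]
        simp [lintegral_indicator_one (hE _)]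
    _ = ∫⁻ ω, ({i | ω ∈ E i}.ncard : ℝ≥0∞) ∂μ := by
        classical
        simp [Set.indicator_apply, sum_boole, Set.ncard_eq_toFinset_card']
    _ ≤ ∫⁻ _, (m : ℝ≥0∞) ∂μ := lintegral_mono_ae (hm.mono fun _ h => by exact_mod_cast h)
    _ = m * μ Set.univ := lintegral_const _

lemma measure_le_div_card_of_ae_ncard_le [IsProbabilityMeasure μ] {κ : Type*} [Fintype κ]
    {E : κ → Set Ω} (hE : ∀ i, MeasurableSet (E i)) {i₀ : κ} (heq : ∀ i, μ (E i) = μ (E i₀))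
    {m : ℕ} (hm : ∀ᵐ ω ∂μ, {i | ω ∈ E i}.ncard ≤ m) :
    μ (E i₀) ≤ m / Fintype.card κ := by
  have hsum := sum_measure_le_of_ae_ncard_le hE hm
  rw [sum_congr rfl fun i _ => heq i, sum_const, card_univ, nsmul_eq_mul, measure_univ,
    mul_one] at hsum
  have : Nonempty κ := ⟨i₀⟩
  rwa [ENNReal.le_div_iff_mul_le (by simp) (by simp), mul_comm]

lemma measure_comp_perm_mem_eq {κ β : Type*} [MeasurableSpace β] {X : Ω → κ → β}
    (hX : Measurable X) {σ : Equiv.Perm κ} (hσ : μ.map (fun ω i => X ω (σ i)) = μ.map X)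
    {A : Set (κ → β)} (hA : MeasurableSet A) :
    μ {ω | (fun i => X ω (σ i)) ∈ A} = μ {ω | X ω ∈ A} := by
  change μ ((fun ω i => X ω (σ i)) ⁻¹' A) = μ (X ⁻¹' A)
  rw [← Measure.map_apply (by fun_prop) hA, hσ, Measure.map_apply hX hA]

end Exchangeability

theorem prob_extremeRank_eq_symmetric_le_general
    {Ω : Type*} [MeasurableSpace Ω] (P : Measure Ω) [IsProbabilityMeasure P]
    {s : ℕ} {ι : Type*} [Fintype ι] [Nonempty ι]
    (T : Fin (s + 1) → Ω → ι → ℝ)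
    (hmeas : ∀ i, Measurable (T i))
    (hexch : ∀ σ : Equiv.Perm (Fin (s + 1)),
      Measure.map (fun ω (i : Fin (s + 1)) => T (σ i) ω) P =
        Measure.map (fun ω (i : Fin (s + 1)) => T i ω) P)
    (hnoties : ∀ᵐ ω ∂P, ∀ r : ι, ∀ i j : Fin (s + 1), i ≠ j → T i ω r ≠ T j ω r)
    (K : (Fin (s + 1) → ι → ℝ) → ℕ)
    (hKmeas : Measurable K)
    (hKinv : ∀ (σ : Equiv.Perm (Fin (s + 1))) (f : Fin (s + 1) → ι → ℝ),
      K (fun i => f (σ i)) = K f) :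
    P {ω | extremeRank (fun i => T i ω) 0 = K (fun i => T i ω)} ≤
      (2 * Fintype.card ι : ℝ≥0∞) / (s + 1) := by
  have hX : Measurable fun ω (i : Fin (s + 1)) => T i ω := measurable_pi_lambda _ hmeas
  have hA (i : Fin (s + 1)) : MeasurableSet {f | extremeRank f i = K f} :=
    measurableSet_eq_fun (measurable_extremeRank i) hKmeas
  let E i := {ω | extremeRank (fun j => T j ω) i = K (fun j => T j ω)}
  have hE_eq (i : Fin (s + 1)) : P (E i) = P (E 0) := by
    have hE_swap :
        E i = {ω | (fun j => T (Equiv.swap 0 i j) ω) ∈ {f | extremeRank f 0 = K f}} := by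
      ext ω
      simp only [E, Set.mem_ofPred_eq]
      rw [extremeRank_comp_perm (fun j => T j ω), Equiv.swap_apply_left,
        show (K fun j => T (Equiv.swap 0 i j) ω) = K fun j => T j ω from hKinv _ fun j => T j ω]
    rw [hE_swap, measure_comp_perm_mem_eq hX (hexch (Equiv.swap 0 i)) (hA 0)]
    rfl
  have hcount : ∀ᵐ ω ∂P, {i | ω ∈ E i}.ncard ≤ 2 * Fintype.card ι := by
    filter_upwards [hnoties] with ω hω
    exact card_extremeRank_eq_le (fun r i j => not_imp_not.1 (hω r i j)) _
  calc P (E 0) ≤ (2 * Fintype.card ι : ℕ) / Fintype.card (Fin (s + 1)) :=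
        measure_le_div_card_of_ae_ncard_le (fun i => hX (hA i)) hE_eq hcount
    _ = (2 * Fintype.card ι : ℝ≥0∞) / (s + 1) := by simp

/-- **Probability that the observed extreme rank equals a symmetric function of the
sample.** Let `s ≥ 1`, `I` a nonempty finite set, and `T_1, …, T_{s+1}` exchangeable
random curves with values in `ℝ^I` such that almost surely there are no pointwise ties.
Let `K : (ℝ^I)^{s+1} → ℕ` be a measurable function invariant under every permutation of
its `s+1` arguments. Then `P(R_1 = K(T_1, …, T_{s+1})) ≤ 2·|I|/(s+1)`. -/
theorem prob_extremeRank_eq_symmetric_le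
    {Ω : Type*} [MeasurableSpace Ω] (P : Measure Ω) [IsProbabilityMeasure P]
    {s : ℕ} (hs : 1 ≤ s) {ι : Type*} [Fintype ι] [Nonempty ι]
    (T : Fin (s + 1) → Ω → ι → ℝ)
    (hmeas : ∀ i, Measurable (T i))
    (hexch : ∀ σ : Equiv.Perm (Fin (s + 1)),
      Measure.map (fun ω (i : Fin (s + 1)) => T (σ i) ω) P =
        Measure.map (fun ω (i : Fin (s + 1)) => T i ω) P)
    (hnoties : ∀ᵐ ω ∂P, ∀ r : ι, ∀ i j : Fin (s + 1), i ≠ j → T i ω r ≠ T j ω r)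
    (K : (Fin (s + 1) → ι → ℝ) → ℕ)
    (hKmeas : Measurable K)
    (hKinv : ∀ (σ : Equiv.Perm (Fin (s + 1))) (f : Fin (s + 1) → ι → ℝ),
      K (fun i => f (σ i)) = K f) :
    P {ω | extremeRank (fun i => T i ω) 0 = K (fun i => T i ω)} ≤
      (2 * Fintype.card ι : ℝ≥0∞) / (s + 1) :=
  prob_extremeRank_eq_symmetric_le_general P T hmeas hexch hnoties K hKmeas hKinv
end
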